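/- Let T be a strong endofunctor on a biclosed V-action C, let (X,s) be a T-algebra, and let u,v : C → TA be a T-equation. Then (X,s) satisfies u ≡ v if and only if (⟦V,X⟧, s_V) satisfies u ≡ v for every V ∈ V. -/

import Mathlib

open CategoryTheory MonoidalCategory Limits

universe w v₁ v₂ v₃ u₁ u₂ u₃

namespace MonEq

variable (V : Type u₁) [Category.{v₁} V] [MonoidalCategory V]
variable (C : Type u₂) [Category.{v₂} C]

/-- An action of a monoidal category `V` on a category `C`, with coherence
isomorphisms `lam : I ⊳ c ≅ c` and `assoc : (u ⊗ v) ⊳ c ≅ u ⊳ (v ⊳ c)`. -/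
structure MonAction where
  act : V ⥤ C ⥤ C
  lam : act.obj (𝟙_ V) ≅ 𝟭 C
  assoc : ∀ u v : V, act.obj (u ⊗ v) ≅ act.obj v ⋙ act.obj u
  assoc_natural :
    ∀ {u u' v v' : V} (f : u ⟶ u') (g : v ⟶ v') (c : C),
      (act.map (f ⊗ₘ g)).app c ≫ (assoc u' v').hom.app c =
        (assoc u v).hom.app c ≫ (act.map f).app ((act.obj v).obj c) ≫
          (act.obj u').map ((act.map g).app c)
  triangle_left :
    ∀ (v : V) (c : C),
      (assoc (𝟙_ V) v).hom.app c ≫ lam.hom.app ((act.obj v).obj c) =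
        (act.map (λ_ v).hom).app c
  triangle_right :
    ∀ (v : V) (c : C),
      (assoc v (𝟙_ V)).hom.app c ≫ (act.obj v).map (lam.hom.app c) =
        (act.map (ρ_ v).hom).app c
  pentagon :
    ∀ (u v w : V) (c : C),
      (act.map (α_ u v w).hom).app c ≫ (assoc u (v ⊗ w)).hom.app c ≫
          (act.obj u).map ((assoc v w).hom.app c) =
        (assoc (u ⊗ v) w).hom.app c ≫ (assoc u v).hom.app ((act.obj w).obj c)

variable {V C}

/-- A right-closed structure on a `V`-action: each functor `(-) ⊳ c : V ⥤ C`
has a right adjoint `rhom c = C̲(c,-) : C ⥤ V`. -/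
structure RightClosed (A : MonAction V C) where
  rhom : C → C ⥤ V
  adj : ∀ c : C, A.act.flip.obj c ⊣ rhom c

/-- A left-closed structure on a `V`-action: each functor `v ⊳ (-) : C ⥤ C`
has a right adjoint `lhom v = ⟦v,-⟧ : C ⥤ C`. -/
structure LeftClosed (A : MonAction V C) where
  lhom : V → C ⥤ C
  adj : ∀ v : V, A.act.obj v ⊣ lhom v

variable {A : MonAction V C}

/-- Evaluation (counit) `ev_{a,x} : C̲(a,x) ⊳ a ⟶ x` of the right-closed structure. -/
def RightClosed.ev (R : RightClosed A) (a x : C) :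
    (A.act.obj ((R.rhom a).obj x)).obj a ⟶ x :=
  (R.adj a).counit.app x

/-- Evaluation (counit) `ev_{v,x} : v ⊳ ⟦v,x⟧ ⟶ x` of the left-closed structure. -/
def LeftClosed.ev (L : LeftClosed A) (v : V) (x : C) :
    (A.act.obj v).obj ((L.lhom v).obj x) ⟶ x :=
  (L.adj v).counit.app x

/-- Contravariant functorial action `C̲(f,x) : C̲(b,x) ⟶ C̲(a,x)` of the right-homs. -/
def RightClosed.rmap (R : RightClosed A) {a b : C} (f : a ⟶ b) (x : C) :
    (R.rhom b).obj x ⟶ (R.rhom a).obj x :=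
  ((R.adj a).homEquiv _ x) ((A.act.obj ((R.rhom b).obj x)).map f ≫ R.ev b x)

/-- Contravariant functorial action `⟦h,x⟧ : ⟦w,x⟧ ⟶ ⟦v,x⟧` of the left-homs. -/
def LeftClosed.lmap (L : LeftClosed A) {v w : V} (h : v ⟶ w) (x : C) :
    (L.lhom w).obj x ⟶ (L.lhom v).obj x :=
  ((L.adj v).homEquiv _ x) ((A.act.map h).app ((L.lhom w).obj x) ≫ L.ev w x)

variable (A) in
/-- A strong endofunctor on a `V`-action. -/
structure StrongEndo where
  F : C ⥤ C
  str : ∀ v : V, F ⋙ A.act.obj v ⟶ A.act.obj v ⋙ F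
  str_natural :
    ∀ {v w : V} (h : v ⟶ w) (c : C),
      (A.act.map h).app (F.obj c) ≫ (str w).app c =
        (str v).app c ≫ F.map ((A.act.map h).app c)
  str_lam :
    ∀ c : C,
      (str (𝟙_ V)).app c ≫ F.map (A.lam.hom.app c) = A.lam.hom.app (F.obj c)
  str_assoc :
    ∀ (u v : V) (c : C),
      (str (u ⊗ v)).app c ≫ F.map ((A.assoc u v).hom.app c) =
        (A.assoc u v).hom.app (F.obj c) ≫ (A.act.obj u).map ((str v).app c) ≫
          (str u).app ((A.act.obj v).obj c)

/-- Strong natural transformations between strong endofunctors. -/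
def IsStrongHom (F G : StrongEndo A) (τ : F.F ⟶ G.F) : Prop :=
  ∀ (v : V) (c : C),
    (A.act.obj v).map (τ.app c) ≫ (G.str v).app c =
      (F.str v).app c ≫ τ.app ((A.act.obj v).obj c)

variable (A) in
/-- A strong monad on a `V`-action: a strong endofunctor with a compatible
monad structure. -/
structure StrongMonad extends StrongEndo A where
  unit : 𝟭 C ⟶ F
  mul : F ⋙ F ⟶ F
  left_unit : ∀ c : C, unit.app (F.obj c) ≫ mul.app c = 𝟙 (F.obj c)
  right_unit : ∀ c : C, F.map (unit.app c) ≫ mul.app c = 𝟙 (F.obj c)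
  mul_assoc' : ∀ c : C, F.map (mul.app c) ≫ mul.app c = mul.app (F.obj c) ≫ mul.app c
  unit_str :
    ∀ (v : V) (c : C),
      (A.act.obj v).map (unit.app c) ≫ (str v).app c = unit.app ((A.act.obj v).obj c)
  mul_str :
    ∀ (v : V) (c : C),
      (str v).app (F.obj c) ≫ F.map ((str v).app c) ≫ mul.app ((A.act.obj v).obj c) =
        (A.act.obj v).map (mul.app c) ≫ (str v).app c

/-- The interpretation map `ι(s)_a : C̲(a,X) ⊳ T a ⟶ X` determined by a strength `σ`
and a `T`-algebra `s : T X ⟶ X`. -/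
def interpMap (R : RightClosed A) (T : C ⥤ C)
    (σ : ∀ v : V, T ⋙ A.act.obj v ⟶ A.act.obj v ⋙ T)
    {X : C} (s : T.obj X ⟶ X) (a : C) :
    (A.act.obj ((R.rhom a).obj X)).obj (T.obj a) ⟶ X :=
  (σ ((R.rhom a).obj X)).app a ≫ T.map (R.ev a X) ≫ s

/-- The interpretation `⟦t⟧_{(X,s)} : C̲(a,X) ⊳ c ⟶ X` of a Kleisli map `t : c ⟶ T a`. -/
def interp (R : RightClosed A) (T : C ⥤ C)
    (σ : ∀ v : V, T ⋙ A.act.obj v ⟶ A.act.obj v ⋙ T)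
    {X : C} (s : T.obj X ⟶ X) {c a : C} (t : c ⟶ T.obj a) :
    (A.act.obj ((R.rhom a).obj X)).obj c ⟶ X :=
  (A.act.obj ((R.rhom a).obj X)).map t ≫ interpMap R T σ s a

/-- Satisfaction of an equation `u ≡ v : c ⟶ T a` by an algebra `(X,s)`. -/
def Satisfies (R : RightClosed A) (T : C ⥤ C)
    (σ : ∀ v : V, T ⋙ A.act.obj v ⟶ A.act.obj v ⋙ T)
    {X : C} (s : T.obj X ⟶ X) {c a : C} (u v : c ⟶ T.obj a) : Prop :=
  interp R T σ s u = interp R T σ s v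

/-- A `T`-equation: a parallel pair of Kleisli maps. -/
structure TEq (T : C ⥤ C) where
  coar : C
  ar : C
  lhs : coar ⟶ T.obj ar
  rhs : coar ⟶ T.obj ar

variable (A) in
/-- A Monadic Equational System: a biclosed `V`-action together with a strong
monad and a set of equations. -/
structure MES where
  R : RightClosed A
  L : LeftClosed A
  T : StrongMonad A
  E : Set (TEq T.F)

/-- Eilenberg–Moore algebra laws for a strong monad. -/
def IsEMAlgebra (M : StrongMonad A) {X : C} (s : M.F.obj X ⟶ X) : Prop :=
  M.unit.app X ≫ s = 𝟙 X ∧ M.mul.app X ≫ s = M.F.map s ≫ s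

/-- An `S`-algebra: an Eilenberg–Moore algebra satisfying all the equations. -/
def IsSAlgebra (S : MES A) {X : C} (s : S.T.F.obj X ⟶ X) : Prop :=
  IsEMAlgebra S.T s ∧ ∀ e ∈ S.E, Satisfies S.R S.T.F S.T.str s e.lhs e.rhs

/-- Free `S`-algebras: a left adjoint (described by its universal property)
to the forgetful functor from `S`-algebras. -/
structure FreeAlgebras (S : MES A) where
  TS : C → C
  τ : ∀ X : C, S.T.F.obj (TS X) ⟶ TS X
  unit : ∀ X : C, X ⟶ TS X
  isAlg : ∀ X : C, IsSAlgebra S (τ X)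
  extend : ∀ (X : C) {Y : C} (t : S.T.F.obj Y ⟶ Y), IsSAlgebra S t →
    ∀ f : X ⟶ Y, ∃! g : TS X ⟶ Y, S.T.F.map g ≫ t = τ X ≫ g ∧ unit X ≫ g = f

/-- The lifted algebra `s_v : T ⟦v,X⟧ ⟶ ⟦v,X⟧` on a left-hom. -/
def liftAlg (L : LeftClosed A) (T : C ⥤ C)
    (σ : ∀ v : V, T ⋙ A.act.obj v ⟶ A.act.obj v ⋙ T)
    {X : C} (s : T.obj X ⟶ X) (v : V) :
    T.obj ((L.lhom v).obj X) ⟶ (L.lhom v).obj X :=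
  ((L.adj v).homEquiv _ X)
    ((σ v).app ((L.lhom v).obj X) ≫ T.map (L.ev v X) ≫ s)

/-- The object part `K_X(a) = ⟦C̲(a,X),X⟧` of the double-dualization construction. -/
def Kobj (R : RightClosed A) (L : LeftClosed A) (X a : C) : C :=
  (L.lhom ((R.rhom a).obj X)).obj X

/-- The morphism part of the double-dualization construction. -/
def Kmap (R : RightClosed A) (L : LeftClosed A) (X : C) {a b : C} (f : a ⟶ b) :
    Kobj R L X a ⟶ Kobj R L X b :=
  L.lmap (R.rmap f X) X

/-- The unit `a ⟶ K_X a` of the double-dualization monad: the transpose of the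
evaluation `ev_{a,X}`. -/
def ddUnit (R : RightClosed A) (L : LeftClosed A) (X a : C) : a ⟶ Kobj R L X a :=
  ((L.adj ((R.rhom a).obj X)).homEquiv a X) (R.ev a X)

/-- The map `δ_v : v ⟶ C̲(⟦v,X⟧,X)`: the transpose of the evaluation `ev_{v,X}`. -/
def dd (R : RightClosed A) (L : LeftClosed A) (X : C) (v : V) :
    v ⟶ (R.rhom ((L.lhom v).obj X)).obj X :=
  ((R.adj ((L.lhom v).obj X)).homEquiv v X) (L.ev v X)

/-- The multiplication `K_X (K_X a) ⟶ K_X a` of the double-dualization monad,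
namely `⟦δ_{C̲(a,X)},X⟧`. -/
def ddMult (R : RightClosed A) (L : LeftClosed A) (X a : C) :
    Kobj R L X (Kobj R L X a) ⟶ Kobj R L X a :=
  L.lmap (dd R L X ((R.rhom a).obj X)) X

/-- The map `C̲(v ⊳ a, X) ⊗ v ⟶ C̲(a,X)`, transpose of `ev ∘ assoc`. -/
def hatg (R : RightClosed A) (X : C) (v : V) (a : C) :
    ((R.rhom ((A.act.obj v).obj a)).obj X) ⊗ v ⟶ (R.rhom a).obj X :=
  ((R.adj a).homEquiv _ X)
    ((A.assoc ((R.rhom ((A.act.obj v).obj a)).obj X) v).hom.app a ≫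
      R.ev ((A.act.obj v).obj a) X)

/-- The clone strength `v ⊳ ⟦C̲(a,X),Y⟧ ⟶ ⟦C̲(v ⊳ a,X),Y⟧`. -/
def cloneStr (R : RightClosed A) (L : LeftClosed A) (X Y : C) (v : V) (a : C) :
    (A.act.obj v).obj ((L.lhom ((R.rhom a).obj X)).obj Y) ⟶
      (L.lhom ((R.rhom ((A.act.obj v).obj a)).obj X)).obj Y :=
  ((L.adj ((R.rhom ((A.act.obj v).obj a)).obj X)).homEquiv _ Y)
    ((A.assoc ((R.rhom ((A.act.obj v).obj a)).obj X) v).inv.app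
        ((L.lhom ((R.rhom a).obj X)).obj Y) ≫
      (A.act.map (hatg R X v a)).app ((L.lhom ((R.rhom a).obj X)).obj Y) ≫
      L.ev ((R.rhom a).obj X) Y)

/-- The counit `ε_X : K_X X ⟶ X` of the clone adjunction at `X`. -/
def cleval (R : RightClosed A) (L : LeftClosed A) (X : C) : Kobj R L X X ⟶ X :=
  L.lmap (((R.adj X).homEquiv (𝟙_ V) X) (A.lam.hom.app X)) X ≫
    A.lam.inv.app ((L.lhom (𝟙_ V)).obj X) ≫ L.ev (𝟙_ V) X

/-- The transpose `m(s)_a : T a ⟶ K_X a` of the interpretation map `ι(s)_a`. -/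
def mOf (R : RightClosed A) (L : LeftClosed A) (T : C ⥤ C)
    (σ : ∀ v : V, T ⋙ A.act.obj v ⟶ A.act.obj v ⋙ T)
    {X : C} (s : T.obj X ⟶ X) (a : C) :
    T.obj a ⟶ Kobj R L X a :=
  ((L.adj ((R.rhom a).obj X)).homEquiv (T.obj a) X) (interpMap R T σ s a)

/-- The identity strength on the identity functor. -/
def idStr (A : MonAction V C) (v : V) : 𝟭 C ⋙ A.act.obj v ⟶ A.act.obj v ⋙ 𝟭 C :=
  { app := fun c => 𝟙 ((A.act.obj v).obj c) }

/-- The unit of the clone monad: the clone transpose of the identity on `X`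
(computed through the identity strong functor). -/
def cloneUnit (R : RightClosed A) (L : LeftClosed A) (X a : C) : a ⟶ Kobj R L X a :=
  mOf R L (𝟭 C) (idStr A) (𝟙 X) a

/-- The multiplication of the clone monad: the clone transpose of
`ε_X ∘ K_X ε_X : K_X K_X X ⟶ X` computed through the composite `K_X ∘ K_X`
with its composite (clone) strength. -/
def cloneMult (R : RightClosed A) (L : LeftClosed A) (X a : C) :
    Kobj R L X (Kobj R L X a) ⟶ Kobj R L X a :=
  ((L.adj ((R.rhom a).obj X)).homEquiv _ X)
    (cloneStr R L X X ((R.rhom a).obj X) (Kobj R L X a) ≫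
      Kmap R L X (cloneStr R L X X ((R.rhom a).obj X) a) ≫
      Kmap R L X (Kmap R L X (R.ev a X)) ≫
      Kmap R L X (cleval R L X) ≫ cleval R L X)

end MonEq

/-!
Interpretations are natural in algebra morphisms: if `h : (X,s) → (Y,t)` then
`⟦u⟧_s ≫ h = (C̲(a,h) ⊳ c) ≫ ⟦u⟧_t`, so satisfaction is reflected along monic algebra
morphisms. The transpose `X → ⟦I,X⟧` of the unitor is a split monic algebra morphism into
`(⟦I,X⟧, s_I)`, which gives one direction. For the other, the strength's associativity law shows
that the transpose `w ⊳ ⟦u⟧_{s_w} → X` of an interpretation in a lifted algebra is `⟦u⟧_s`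
precomposed with a map that does not depend on `u`.
-/

namespace MonEq

variable {V : Type u₁} [Category.{v₁} V] [MonoidalCategory V]
variable {C : Type u₂} [Category.{v₂} C] {A : MonAction V C}

lemma LeftClosed.map_homEquiv_comp_ev (L : LeftClosed A) {v : V} {y x : C}
    (f : (A.act.obj v).obj y ⟶ x) :
    (A.act.obj v).map ((L.adj v).homEquiv y x f) ≫ L.ev v x = f :=
  ((L.adj v).homEquiv_counit _ _ _).symm.trans (Equiv.symm_apply_apply _ f)

lemma LeftClosed.hom_ext (L : LeftClosed A) {v : V} {y x : C} {f g : y ⟶ (L.lhom v).obj x}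
    (h : (A.act.obj v).map f ≫ L.ev v x = (A.act.obj v).map g ≫ L.ev v x) : f = g :=
  ((L.adj v).homEquiv y x).symm.injective <| by
    simpa only [Adjunction.homEquiv_counit, LeftClosed.ev] using h

lemma RightClosed.map_homEquiv_app_comp_ev (R : RightClosed A) {w : V} {a x : C}
    (f : (A.act.obj w).obj a ⟶ x) :
    (A.act.map ((R.adj a).homEquiv w x f)).app a ≫ R.ev a x = f :=
  ((R.adj a).homEquiv_counit _ _ _).symm.trans (Equiv.symm_apply_apply _ f)

lemma RightClosed.ev_naturality (R : RightClosed A) {X Y : C} (h : X ⟶ Y) (a : C) :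
    (A.act.map ((R.rhom a).map h)).app a ≫ R.ev a Y = R.ev a X ≫ h :=
  (R.adj a).counit.naturality h

lemma map_liftAlg_comp_ev (L : LeftClosed A) (T : C ⥤ C)
    (σ : ∀ v : V, T ⋙ A.act.obj v ⟶ A.act.obj v ⋙ T) {X : C} (s : T.obj X ⟶ X) (w : V) :
    (A.act.obj w).map (liftAlg L T σ s w) ≫ L.ev w X =
      (σ w).app ((L.lhom w).obj X) ≫ T.map (L.ev w X) ≫ s :=
  L.map_homEquiv_comp_ev _

def LeftClosed.toLhomUnit (L : LeftClosed A) (X : C) : X ⟶ (L.lhom (𝟙_ V)).obj X :=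
  (L.adj (𝟙_ V)).homEquiv X X (A.lam.hom.app X)

lemma LeftClosed.map_toLhomUnit_comp_ev (L : LeftClosed A) (X : C) :
    (A.act.obj (𝟙_ V)).map (L.toLhomUnit X) ≫ L.ev (𝟙_ V) X = A.lam.hom.app X :=
  L.map_homEquiv_comp_ev _

instance LeftClosed.isSplitMono_toLhomUnit (L : LeftClosed A) (X : C) :
    IsSplitMono (L.toLhomUnit X) :=
  IsSplitMono.mk' ⟨A.lam.inv.app _ ≫ L.ev (𝟙_ V) X, by
    rw [← Category.assoc]
    erw [A.lam.inv.naturality, Category.assoc, L.map_toLhomUnit_comp_ev]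
    exact A.lam.inv_hom_id_app X⟩

def rhomLhomUncurry (R : RightClosed A) (L : LeftClosed A) (X : C) (w : V) (a : C) :
    w ⊗ (R.rhom a).obj ((L.lhom w).obj X) ⟶ (R.rhom a).obj X :=
  (R.adj a).homEquiv _ X
    ((A.assoc w ((R.rhom a).obj ((L.lhom w).obj X))).hom.app a ≫
      (A.act.obj w).map (R.ev a ((L.lhom w).obj X)) ≫ L.ev w X)

section StrongEndo

variable (R : RightClosed A) (T : StrongEndo A)

lemma interpMap_comp_of_comm {X Y : C} {s : T.F.obj X ⟶ X} {t : T.F.obj Y ⟶ Y} {h : X ⟶ Y}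
    (hh : s ≫ h = T.F.map h ≫ t) (a : C) :
    interpMap R T.F T.str s a ≫ h =
      (A.act.map ((R.rhom a).map h)).app (T.F.obj a) ≫ interpMap R T.F T.str t a := by
  rw [interpMap, interpMap, Category.assoc, Category.assoc, hh, ← Functor.map_comp_assoc,
    ← R.ev_naturality, Functor.map_comp_assoc, reassoc_of% T.str_natural]

lemma interp_comp_of_comm {X Y : C} {s : T.F.obj X ⟶ X} {t : T.F.obj Y ⟶ Y} {h : X ⟶ Y}
    (hh : s ≫ h = T.F.map h ≫ t) {c a : C} (u : c ⟶ T.F.obj a) :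
    interp R T.F T.str s u ≫ h =
      (A.act.map ((R.rhom a).map h)).app c ≫ interp R T.F T.str t u := by
  rw [interp, Category.assoc, interpMap_comp_of_comm R T hh, interp, NatTrans.naturality_assoc]

lemma Satisfies.of_comp_mono {X Y : C} {s : T.F.obj X ⟶ X} {t : T.F.obj Y ⟶ Y} (h : X ⟶ Y)
    [Mono h] (hh : s ≫ h = T.F.map h ≫ t) {c a : C} {u v : c ⟶ T.F.obj a}
    (huv : Satisfies R T.F T.str t u v) : Satisfies R T.F T.str s u v := by
  rw [Satisfies, ← cancel_mono h, interp_comp_of_comm R T hh, interp_comp_of_comm R T hh]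
  exact congrArg _ huv

variable (L : LeftClosed A)

lemma map_interpMap_liftAlg_comp_ev {X : C} (s : T.F.obj X ⟶ X) (w : V) (a : C) :
    (A.act.obj w).map (interpMap R T.F T.str (liftAlg L T.F T.str s w) a) ≫ L.ev w X =
      (A.assoc w _).inv.app (T.F.obj a) ≫
        (A.act.map (rhomLhomUncurry R L X w a)).app (T.F.obj a) ≫ interpMap R T.F T.str s a := by
  set Q := (R.rhom a).obj ((L.lhom w).obj X)
  have hstr : (A.act.obj w).map ((T.str Q).app a) ≫ (T.str w).app ((A.act.obj Q).obj a) =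
      (A.assoc w Q).inv.app (T.F.obj a) ≫ (T.str (w ⊗ Q)).app a ≫
        T.F.map ((A.assoc w Q).hom.app a) := by
    rw [T.str_assoc, Iso.inv_hom_id_app_assoc]
  calc _ = (A.act.obj w).map ((T.str Q).app a) ≫ (T.str w).app ((A.act.obj Q).obj a) ≫
        T.F.map ((A.act.obj w).map (R.ev a ((L.lhom w).obj X)) ≫ L.ev w X) ≫ s := by
        simp only [interpMap, Functor.map_comp, Category.assoc, map_liftAlg_comp_ev]
        erw [(T.str w).naturality_assoc]
        rfl
    _ = (A.assoc w Q).inv.app (T.F.obj a) ≫ (T.str (w ⊗ Q)).app a ≫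
        T.F.map ((A.act.map (rhomLhomUncurry R L X w a)).app a ≫ R.ev a X) ≫ s := by
        rw [reassoc_of% hstr, rhomLhomUncurry, RightClosed.map_homEquiv_app_comp_ev]
        simp only [Functor.map_comp, Category.assoc]
        rfl
    _ = _ := by
        rw [Functor.map_comp_assoc, interpMap, reassoc_of% T.str_natural]

lemma map_interp_liftAlg_comp_ev {X : C} (s : T.F.obj X ⟶ X) (w : V) {c a : C}
    (u : c ⟶ T.F.obj a) :
    (A.act.obj w).map (interp R T.F T.str (liftAlg L T.F T.str s w) u) ≫ L.ev w X =
      (A.assoc w _).inv.app c ≫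
        (A.act.map (rhomLhomUncurry R L X w a)).app c ≫ interp R T.F T.str s u := by
  rw [interp, Functor.map_comp, Category.assoc, map_interpMap_liftAlg_comp_ev, interp]
  erw [(A.assoc w _).inv.naturality_assoc u, NatTrans.naturality_assoc]

lemma satisfies_liftAlg {X : C} {s : T.F.obj X ⟶ X} {c a : C} {u v : c ⟶ T.F.obj a}
    (huv : Satisfies R T.F T.str s u v) (w : V) :
    Satisfies R T.F T.str (liftAlg L T.F T.str s w) u v :=
  L.hom_ext (by rw [map_interp_liftAlg_comp_ev, map_interp_liftAlg_comp_ev, huv])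

lemma toLhomUnit_comm {X : C} (s : T.F.obj X ⟶ X) :
    s ≫ L.toLhomUnit X = T.F.map (L.toLhomUnit X) ≫ liftAlg L T.F T.str s (𝟙_ V) := by
  apply L.hom_ext
  calc _ = A.lam.hom.app (T.F.obj X) ≫ s := by
        rw [Functor.map_comp_assoc, L.map_toLhomUnit_comp_ev]
        exact A.lam.hom.naturality s
    _ = (T.str (𝟙_ V)).app X ≫ T.F.map ((A.act.obj (𝟙_ V)).map (L.toLhomUnit X) ≫
          L.ev (𝟙_ V) X) ≫ s := by
        rw [L.map_toLhomUnit_comp_ev, reassoc_of% T.str_lam]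
    _ = _ := by
        rw [(A.act.obj _).map_comp, Category.assoc, map_liftAlg_comp_ev, Functor.map_comp_assoc]
        erw [(T.str (𝟙_ V)).naturality_assoc]
        rfl

end StrongEndo

/-- **Satisfaction is closed under left-homs** (Corollary 5.? of the paper).
For a strong endofunctor `T` on a biclosed `V`-action, a `T`-algebra `(X,s)`
satisfies the equation `u ≡ v : c ⟶ T a` if and only if the lifted algebra
`(⟦w,X⟧, s_w)` satisfies it for every `w ∈ V`. -/
theorem satisfies_iff_lifted_satisfies
    {V : Type u₁} [Category.{v₁} V] [MonoidalCategory V]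
    {C : Type u₂} [Category.{v₂} C]
    {A : MonAction V C} (R : RightClosed A) (L : LeftClosed A)
    (T : StrongEndo A) {X : C} (s : T.F.obj X ⟶ X)
    {c a : C} (u v : c ⟶ T.F.obj a) :
    Satisfies R T.F T.str s u v ↔
      ∀ w : V, Satisfies R T.F T.str (liftAlg L T.F T.str s w) u v :=
  ⟨fun huv w => satisfies_liftAlg R T L huv w,
    fun huv => (huv (𝟙_ V)).of_comp_mono R T (L.toLhomUnit X) (toLhomUnit_comm T L s)⟩

end MonEq
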